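/- arXiv:2312.05954 — 5 statements merged into one kernel-verified Lean document; each statement's English description precedes it below -/
import Mathlib

section
/- Let 𝒜 be an abelian category in which every object has finite length, and let P₁, P₂ be projective objects of 𝒜 such that: (1) no simple object is a subquotient of both P₁ and P₂; (2) every simple object of 𝒜 is a subquotient of P₁ or of P₂; (3) for each i and each simple subquotient S of Pᵢ there is an epimorphism Pᵢ → S. Then every object X of 𝒜 decomposes canonically as X ≅ X₁ ⊕ X₂, where all simple subquotients of Xᵢ are subquotients of Pᵢ, and Hom(X₁, X₂) = Hom(X₂, X₁) = 0. -/
open CategoryTheory CategoryTheory.Limits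

universe v u

/-- `S` is a simple subquotient of `X`: `S` is simple and is a quotient of a subobject of
`X` (equivalently, there is an object `Y` with a mono `Y ⟶ X` and an epi `Y ⟶ S`). -/
def IsSimpleSubquotient {𝒜 : Type u} [Category.{v} 𝒜] [Abelian 𝒜] (S X : 𝒜) : Prop :=
  Simple S ∧ ∃ (Y : 𝒜) (i : Y ⟶ X) (p : Y ⟶ S), Mono i ∧ Epi p

/-- `X` has finite length: it admits a composition series, i.e. a finite chain of subobjects
from `⊥` to `⊤` with simple successive quotients. -/
def HasFiniteLength {𝒜 : Type u} [Category.{v} 𝒜] [Abelian 𝒜] (X : 𝒜) : Prop :=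
  ∃ (n : ℕ) (c : Fin (n + 1) → Subobject X) (hc : Monotone c),
    c 0 = ⊥ ∧ c (Fin.last n) = ⊤ ∧
    ∀ i : Fin n, Simple (cokernel (Subobject.ofLE (c i.castSucc) (c i.succ)
      (hc (Fin.castSucc_lt_succ (i := i)).le)))

/-!
Induction along a composition series. Let `Cᵢ` be the class of objects all of whose simple
subquotients are simple subquotients of `Pᵢ`. It is a Serre class, and by disjointness an object
lying in both classes has no simple subquotient, hence is zero; in particular there are no nonzero
maps between `C₁` and `C₂`.

For the inductive step let `A₁ ⊞ A₂ ↪ X` with `Aᵢ ∈ Cᵢ` and simple cokernel `S`, say `S ∈ C₂`.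
The extension `0 → A₁ → X / A₂ → S → 0` splits: lift an epimorphism `P₂ ↠ S` to `X / A₂`; the
image of the lift maps onto `S` with kernel in `C₁ ∩ C₂`, so isomorphically. The resulting
retraction `X → A₁` splits `A₁` off `X`, and the complement `X / A₁` is an extension of `S`
by `A₂`, hence lies in `C₂`.
-/

section

variable {𝒜 : Type u} [Category.{v} 𝒜] [Abelian 𝒜]

namespace IsSimpleSubquotient

theorem of_mono {S X Y : 𝒜} (f : X ⟶ Y) [Mono f] (h : IsSimpleSubquotient S X) :
    IsSimpleSubquotient S Y := by
  obtain ⟨hS, Z, i, p, hi, hp⟩ := h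
  exact ⟨hS, Z, i ≫ f, p, mono_comp i f, hp⟩

theorem of_epi {S X Y : 𝒜} (f : X ⟶ Y) [Epi f] (h : IsSimpleSubquotient S Y) :
    IsSimpleSubquotient S X := by
  obtain ⟨hS, Z, i, p, hi, hp⟩ := h
  exact ⟨hS, pullback f i, pullback.fst f i, pullback.snd f i ≫ p, inferInstance,
    epi_comp _ p⟩

theorem trans {T S X : 𝒜} (hT : IsSimpleSubquotient T S) (hS : IsSimpleSubquotient S X) :
    IsSimpleSubquotient T X := by
  obtain ⟨-, Y, i, p, hi, hp⟩ := hS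
  exact (hT.of_epi p).of_mono i

theorem not_isZero {S X : 𝒜} (h : IsSimpleSubquotient S X) : ¬IsZero X := by
  obtain ⟨hS, Y, i, p, hi, hp⟩ := h
  exact fun hX => Simple.not_isZero S ((hX.of_mono i).of_epi p)

/-- Given `S.X₂ ↩ Y ↠ T`: either `Y ∩ S.X₁` still maps onto `T`, or `Y ↠ T` factors through the
image of `Y` in `S.X₃`. -/
theorem of_shortExact {T : 𝒜} {S : ShortComplex 𝒜} (hS : S.ShortExact)
    (h : IsSimpleSubquotient T S.X₂) :
    IsSimpleSubquotient T S.X₁ ∨ IsSimpleSubquotient T S.X₃ := by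
  obtain ⟨hT, Y, i, p, hi, hp⟩ := h
  have := hS.mono_f
  by_cases hmeet : pullback.fst i S.f ≫ p = 0
  · right
    let q := i ≫ S.g
    have hker : kernel.ι q ≫ p = 0 := by
      let l := hS.exact.lift (kernel.ι q ≫ i) (by simp [q])
      have hl : pullback.lift (kernel.ι q) l (by simp [l]) ≫ pullback.fst i S.f = kernel.ι q :=
        pullback.lift_fst _ _ _
      rw [← hl, Category.assoc, hmeet, comp_zero]
    have : Epi (cokernel.desc (kernel.ι q) p hker) := epi_of_epi_fac (cokernel.π_desc _ _ _)
    exact ⟨hT, Abelian.coimage q, Abelian.factorThruCoimage q, cokernel.desc _ p hker,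
      inferInstance, this⟩
  · left
    exact ⟨hT, pullback i S.f, pullback.snd i S.f, pullback.fst i S.f ≫ p, inferInstance,
      epi_of_nonzero_to_simple hmeet⟩

end IsSimpleSubquotient

theorem HasFiniteLength.exists_isSimpleSubquotient {X : 𝒜} (hX : HasFiniteLength X)
    (hX₀ : ¬IsZero X) : ∃ S, IsSimpleSubquotient S X := by
  obtain ⟨n, c, hc, h0, hlast, hsimple⟩ := hX
  cases n with
  | zero =>
    have hbot : (⊤ : Subobject X) = ⊥ := by rw [← h0, ← hlast]; rfl
    have htop : IsZero ((⊤ : Subobject X) : 𝒜) := by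
      rw [hbot]; exact (isZero_zero 𝒜).of_iso Subobject.botCoeIsoZero
    exact absurd (htop.of_iso (asIso (⊤ : Subobject X).arrow).symm) hX₀
  | succ m =>
    exact ⟨_, hsimple 0, _, (c (0 : Fin (m + 1)).succ).arrow, cokernel.π _,
      inferInstance, inferInstance⟩

def subquotientClass (P : 𝒜) : ObjectProperty 𝒜 :=
  fun X => ∀ S, IsSimpleSubquotient S X → IsSimpleSubquotient S P

instance (P : 𝒜) : (subquotientClass P).IsSerreClass where
  exists_zero := ⟨_, isZero_zero 𝒜, fun _ hS => absurd (isZero_zero 𝒜) hS.not_isZero⟩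
  prop_of_mono f _ hY S hS := hY S (hS.of_mono f)
  prop_of_epi f _ hX S hS := hX S (hS.of_epi f)
  prop_X₂_of_shortExact hS h₁ h₃ T hT := (hT.of_shortExact hS).elim (h₁ T) (h₃ T)

theorem subquotientClass_self (P : 𝒜) : subquotientClass P P := fun _ => id

theorem IsSimpleSubquotient.subquotientClass {S P : 𝒜} (hS : IsSimpleSubquotient S P) :
    subquotientClass P S :=
  fun _ hT => hT.trans hS

theorem isZero_of_subquotientClass {P P' K : 𝒜} (hK : HasFiniteLength K)
    (hdisj : ∀ S, IsSimpleSubquotient S P → ¬IsSimpleSubquotient S P')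
    (h : subquotientClass P K) (h' : subquotientClass P' K) : IsZero K := by
  by_contra hK₀
  obtain ⟨S, hS⟩ := hK.exists_isSimpleSubquotient hK₀
  exact hdisj S (h S hS) (h' S hS)

theorem eq_zero_of_subquotientClass {P P' X Y : 𝒜} (hlen : ∀ X : 𝒜, HasFiniteLength X)
    (hdisj : ∀ S, IsSimpleSubquotient S P → ¬IsSimpleSubquotient S P')
    (hX : subquotientClass P X) (hY : subquotientClass P' Y) (f : X ⟶ Y) : f = 0 := by
  have : IsZero (image f) := isZero_of_subquotientClass (hlen _) hdisj
    ((subquotientClass P).prop_of_epi (factorThruImage f) hX)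
    ((subquotientClass P').prop_of_mono (image.ι f) hY)
  rw [← image.fac f, this.eq_of_src (image.ι f) 0, comp_zero]

/-- The sequence `Y / B ⟶ X / B ⟶ X / Y` of the third isomorphism theorem. -/
noncomputable abbrev cokernelCompSequence {B Y X : 𝒜} (i : B ⟶ Y) (f : Y ⟶ X) : ShortComplex 𝒜 :=
  ShortComplex.mk (cokernel.map i (i ≫ f) (𝟙 B) f (by simp))
    (cokernel.desc (i ≫ f) (cokernel.π f) (by simp)) (by ext; simp)

open scoped Pseudoelement in
theorem cokernelCompSequence_shortExact {B Y X : 𝒜} (i : B ⟶ Y) (f : Y ⟶ X) [Mono f] :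
    (cokernelCompSequence i f).ShortExact := by
  have hmono : Mono (cokernelCompSequence i f).f := by
    refine Abelian.Pseudoelement.mono_of_zero_of_map_zero _ fun z hz => ?_
    obtain ⟨y, rfl⟩ := Abelian.Pseudoelement.pseudo_surjective_of_epi (cokernel.π i) z
    rw [← Abelian.Pseudoelement.comp_apply, cokernel.π_desc,
      Abelian.Pseudoelement.comp_apply] at hz
    obtain ⟨b, hb⟩ := Abelian.Pseudoelement.pseudo_exact_of_exact
      (ShortComplex.exact_cokernel (i ≫ f)) _ hz
    rw [Abelian.Pseudoelement.comp_apply] at hb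
    rw [← Abelian.Pseudoelement.pseudo_injective_of_mono f hb,
      ← Abelian.Pseudoelement.comp_apply, cokernel.condition,
      Abelian.Pseudoelement.zero_apply]
  have hcok : IsColimit (CokernelCofork.ofπ _ (cokernelCompSequence i f).zero) :=
    CokernelCofork.IsColimit.ofπ _ _
      (fun h hh => cokernel.desc f (cokernel.π (i ≫ f) ≫ h) (by
        simpa using congrArg (cokernel.π i ≫ ·) hh))
      (fun h hh => by ext; simp) (fun h hh m hm => by ext; simp [← hm])
  have hfac : cokernel.π (i ≫ f) ≫ (cokernelCompSequence i f).g = cokernel.π f :=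
    cokernel.π_desc _ _ _
  exact ShortComplex.ShortExact.mk' (ShortComplex.exact_of_g_is_cokernel _ hcok) hmono
    (epi_of_epi_fac hfac)

theorem CategoryTheory.ShortComplex.ShortExact.nonempty_splitting_of_epi_of_projective
    {S : ShortComplex 𝒜} (hS : S.ShortExact) (hlen : ∀ X : 𝒜, HasFiniteLength X)
    {P : 𝒜} [Projective P] (π : P ⟶ S.X₃) [Epi π]
    (hdisj : ∀ T, IsSimpleSubquotient T S.X₁ → ¬IsSimpleSubquotient T P) :
    Nonempty S.Splitting := by
  have := hS.mono_f
  have := hS.epi_g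
  obtain ⟨t, ht⟩ := Projective.factors π S.g
  let m := image.ι t
  have : Epi (m ≫ S.g) := epi_of_epi_fac (f := factorThruImage t) (by rw [image.fac_assoc, ht])
  let k := kernel.ι (m ≫ S.g)
  let l := hS.exact.lift (k ≫ m) (by simp [k])
  have : Mono l := mono_of_mono_fac (hS.exact.lift_f _ _)
  have hK : IsZero (kernel (m ≫ S.g)) := isZero_of_subquotientClass (hlen _) hdisj
    ((subquotientClass S.X₁).prop_of_mono l (subquotientClass_self _))
    ((subquotientClass P).prop_of_mono k
      ((subquotientClass P).prop_of_epi (factorThruImage t) (subquotientClass_self P)))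
  have : Mono (m ≫ S.g) := Preadditive.mono_of_isZero_kernel _ hK
  have : IsIso (m ≫ S.g) := isIso_of_mono_of_epi _
  exact ⟨ShortComplex.Splitting.ofExactOfSection S hS.exact (inv (m ≫ S.g) ≫ m) (by simp)
    hS.mono_f⟩

theorem exists_iso_biprod_of_mono_biprod (hlen : ∀ X : 𝒜, HasFiniteLength X) {P₁ P₂ : 𝒜}
    [Projective P₂] (hdisj : ∀ S, IsSimpleSubquotient S P₁ → ¬IsSimpleSubquotient S P₂)
    {A₁ A₂ X : 𝒜} (f : A₁ ⊞ A₂ ⟶ X) [Mono f] (π : P₂ ⟶ cokernel f) [Epi π]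
    (h₁ : subquotientClass P₁ A₁) (h₂ : subquotientClass P₂ A₂)
    (hf : subquotientClass P₂ (cokernel f)) :
    ∃ X₂, Nonempty (X ≅ A₁ ⊞ X₂) ∧ subquotientClass P₂ X₂ := by
  obtain ⟨σ⟩ := ShortComplex.ShortExact.nonempty_splitting_of_epi_of_projective
    (cokernelCompSequence_shortExact biprod.inr f) hlen π fun T hT =>
      hdisj T ((subquotientClass P₁).prop_of_iso (cokernelBiprodInrIso (X := A₁) (Y := A₂)).symm
        h₁ T hT)
  let r : X ⟶ A₁ :=
    cokernel.π (biprod.inr ≫ f) ≫ σ.r ≫ (cokernelBiprodInrIso (X := A₁) (Y := A₂)).hom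
  have hr : (biprod.inl ≫ f) ≫ r = 𝟙 A₁ := by
    have hπ : f ≫ cokernel.π (biprod.inr ≫ f) =
        cokernel.π biprod.inr ≫ (cokernelCompSequence biprod.inr f).f :=
      (cokernel.π_desc _ _ _).symm
    have hfst : cokernel.π (biprod.inr : A₂ ⟶ A₁ ⊞ A₂) ≫ cokernelBiprodInrIso.hom = biprod.fst :=
      colimit.isoColimitCocone_ι_hom _ _
    simp only [r, Category.assoc]
    rw [reassoc_of% hπ, σ.f_r_assoc, hfst, biprod.inl_fst]
  let τ := ShortComplex.Splitting.ofExactOfRetraction _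
    (ShortComplex.exact_cokernel (biprod.inl ≫ f)) r hr inferInstance
  refine ⟨cokernel (biprod.inl ≫ f), ⟨τ.isoBinaryBiproduct⟩, ?_⟩
  exact (subquotientClass P₂).prop_X₂_of_shortExact (cokernelCompSequence_shortExact biprod.inl f)
    ((subquotientClass P₂).prop_of_iso (cokernelBiprodInlIso (X := A₁) (Y := A₂)).symm h₂) hf

def HasBlockDecomposition (P₁ P₂ X : 𝒜) : Prop :=
  ∃ (X₁ X₂ : 𝒜) (_ : X ≅ X₁ ⊞ X₂), subquotientClass P₁ X₁ ∧ subquotientClass P₂ X₂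

namespace HasBlockDecomposition

variable {P₁ P₂ : 𝒜}

theorem of_isZero {X : 𝒜} (hX : IsZero X) : HasBlockDecomposition P₁ P₂ X :=
  ⟨X, X, isoBiprodZero hX, (subquotientClass P₁).prop_of_isZero hX,
    (subquotientClass P₂).prop_of_isZero hX⟩

theorem of_iso {X Y : 𝒜} (h : HasBlockDecomposition P₁ P₂ X) (e : X ≅ Y) :
    HasBlockDecomposition P₁ P₂ Y := by
  obtain ⟨X₁, X₂, e', h₁, h₂⟩ := h
  exact ⟨X₁, X₂, e.symm ≪≫ e', h₁, h₂⟩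

theorem symm {X : 𝒜} (h : HasBlockDecomposition P₁ P₂ X) : HasBlockDecomposition P₂ P₁ X := by
  obtain ⟨X₁, X₂, e, h₁, h₂⟩ := h
  exact ⟨X₂, X₁, e ≪≫ biprod.braiding X₁ X₂, h₂, h₁⟩

theorem of_mono (hlen : ∀ X : 𝒜, HasFiniteLength X) [Projective P₂]
    (hdisj : ∀ S, IsSimpleSubquotient S P₁ → ¬IsSimpleSubquotient S P₂)
    {A X : 𝒜} (h : HasBlockDecomposition P₁ P₂ A) (f : A ⟶ X) [Mono f]
    (π : P₂ ⟶ cokernel f) [Epi π] (hf : subquotientClass P₂ (cokernel f)) :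
    HasBlockDecomposition P₁ P₂ X := by
  obtain ⟨A₁, A₂, e, h₁, h₂⟩ := h
  let c := cokernelEpiComp e.inv f
  obtain ⟨X₂, ⟨e'⟩, hX₂⟩ := exists_iso_biprod_of_mono_biprod hlen hdisj (e.inv ≫ f)
    (π ≫ c.inv) h₁ h₂ ((subquotientClass P₂).prop_of_iso c.symm hf)
  exact ⟨A₁, X₂, e', h₁, hX₂⟩

theorem of_mono_of_simple (hlen : ∀ X : 𝒜, HasFiniteLength X) [Projective P₁] [Projective P₂]
    (hdisj : ∀ S, IsSimpleSubquotient S P₁ → ¬IsSimpleSubquotient S P₂)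
    (hcover : ∀ S : 𝒜, Simple S → IsSimpleSubquotient S P₁ ∨ IsSimpleSubquotient S P₂)
    (hsurj₁ : ∀ S : 𝒜, IsSimpleSubquotient S P₁ → ∃ f : P₁ ⟶ S, Epi f)
    (hsurj₂ : ∀ S : 𝒜, IsSimpleSubquotient S P₂ → ∃ f : P₂ ⟶ S, Epi f)
    {A X : 𝒜} (h : HasBlockDecomposition P₁ P₂ A) (f : A ⟶ X) [Mono f] [Simple (cokernel f)] :
    HasBlockDecomposition P₁ P₂ X := by
  rcases hcover (cokernel f) inferInstance with hS | hS
  · obtain ⟨π, hπ⟩ := hsurj₁ _ hS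
    exact (h.symm.of_mono hlen (fun S h₂ h₁ => hdisj S h₁ h₂) f π hS.subquotientClass).symm
  · obtain ⟨π, hπ⟩ := hsurj₂ _ hS
    exact h.of_mono hlen hdisj f π hS.subquotientClass

end HasBlockDecomposition

theorem hasBlockDecomposition (hlen : ∀ X : 𝒜, HasFiniteLength X) {P₁ P₂ : 𝒜}
    [Projective P₁] [Projective P₂]
    (hdisj : ∀ S, IsSimpleSubquotient S P₁ → ¬IsSimpleSubquotient S P₂)
    (hcover : ∀ S : 𝒜, Simple S → IsSimpleSubquotient S P₁ ∨ IsSimpleSubquotient S P₂)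
    (hsurj₁ : ∀ S : 𝒜, IsSimpleSubquotient S P₁ → ∃ f : P₁ ⟶ S, Epi f)
    (hsurj₂ : ∀ S : 𝒜, IsSimpleSubquotient S P₂ → ∃ f : P₂ ⟶ S, Epi f)
    (X : 𝒜) : HasBlockDecomposition P₁ P₂ X := by
  obtain ⟨n, c, hc, h0, hlast, hsimple⟩ := hlen X
  have hstep : ∀ i, HasBlockDecomposition P₁ P₂ (c i : 𝒜) := by
    refine Fin.induction ?_ fun i hi => ?_
    · rw [h0]
      exact .of_isZero ((isZero_zero 𝒜).of_iso Subobject.botCoeIsoZero)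
    · have := hsimple i
      exact hi.of_mono_of_simple hlen hdisj hcover hsurj₁ hsurj₂ (Subobject.ofLE _ _ _)
  have htop := hstep (Fin.last n)
  rw [hlast] at htop
  exact htop.of_iso (asIso (⊤ : Subobject X).arrow)

end

/-- Morita-type decomposition criterion. Let `𝒜` be an abelian category in which every
object has finite length, and `P₁`, `P₂` projective objects such that: no simple object is a
simple subquotient of both; every simple object is a simple subquotient of one of them; and
each simple subquotient of `Pᵢ` receives an epimorphism from `Pᵢ`. Then every object `X`
decomposes as `X ≅ X₁ ⊞ X₂` where all simple subquotients of `Xᵢ` are simple subquotients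
of `Pᵢ`, and there are no nonzero morphisms between `X₁` and `X₂` in either direction. -/
theorem morita_decomposition
    {𝒜 : Type u} [Category.{v} 𝒜] [Abelian 𝒜]
    (hlen : ∀ X : 𝒜, HasFiniteLength X)
    (P₁ P₂ : 𝒜) (hP₁ : Projective P₁) (hP₂ : Projective P₂)
    (hdisj : ∀ S : 𝒜, Simple S → ¬(IsSimpleSubquotient S P₁ ∧ IsSimpleSubquotient S P₂))
    (hcover : ∀ S : 𝒜, Simple S → IsSimpleSubquotient S P₁ ∨ IsSimpleSubquotient S P₂)
    (hsurj₁ : ∀ S : 𝒜, IsSimpleSubquotient S P₁ → ∃ f : P₁ ⟶ S, Epi f)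
    (hsurj₂ : ∀ S : 𝒜, IsSimpleSubquotient S P₂ → ∃ f : P₂ ⟶ S, Epi f) :
    ∀ X : 𝒜, ∃ (X₁ X₂ : 𝒜) (_ : X ≅ X₁ ⊞ X₂),
      (∀ S : 𝒜, IsSimpleSubquotient S X₁ → IsSimpleSubquotient S P₁) ∧
      (∀ S : 𝒜, IsSimpleSubquotient S X₂ → IsSimpleSubquotient S P₂) ∧
      (∀ f : X₁ ⟶ X₂, f = 0) ∧ (∀ f : X₂ ⟶ X₁, f = 0) := by
  intro X
  have hdisj₁₂ : ∀ S, IsSimpleSubquotient S P₁ → ¬IsSimpleSubquotient S P₂ :=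
    fun S h₁ h₂ => hdisj S h₁.1 ⟨h₁, h₂⟩
  have hdisj₂₁ : ∀ S, IsSimpleSubquotient S P₂ → ¬IsSimpleSubquotient S P₁ :=
    fun S h₂ h₁ => hdisj₁₂ S h₁ h₂
  obtain ⟨X₁, X₂, e, h₁, h₂⟩ := hasBlockDecomposition hlen hdisj₁₂ hcover hsurj₁ hsurj₂ X
  exact ⟨X₁, X₂, e, h₁, h₂, eq_zero_of_subquotientClass hlen hdisj₁₂ h₁ h₂,
    eq_zero_of_subquotientClass hlen hdisj₂₁ h₂ h₁⟩
end

section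
/- Let G be a finite group, N a normal subgroup of G, k a field, and V a simple k[G]-module. Then the restriction of V to k[N] is a semisimple k[N]-module. -/
open MonoidAlgebra

/-!
Let `S` be the socle of `V` as a `k[N]`-module. It is nonzero, because `V` is finitely generated
over the artinian ring `k[N]` and so contains a simple `k[N]`-submodule. For `g ∈ G`, the map
`v ↦ g • v` is semilinear with respect to the automorphism of `k[N]` induced by conjugation by
`g`, so it permutes the simple `k[N]`-submodules of `V` and preserves `S`. Hence `S` is a nonzero
`k[G]`-submodule of the simple module `V`, that is, `S = V`.
-/

section Socle

variable {R R₂ M M₂ : Type*} [Ring R] [Ring R₂] [AddCommGroup M] [AddCommGroup M₂]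
  [Module R M] [Module R₂ M₂]

variable (R M) in
def socle : Submodule R M := sSup {m : Submodule R M | IsSimpleModule R m}

theorem socle_ne_bot [IsAtomic (Submodule R M)] [Nontrivial M] : socle R M ≠ ⊥ := by
  obtain ⟨m, hm⟩ := IsAtomic.exists_atom (Submodule R M)
  exact ne_bot_of_le_ne_bot hm.1 (le_sSup (isSimpleModule_iff_isAtom.2 hm))

theorem map_socle {σ : R →+* R₂} {σ' : R₂ →+* R} [RingHomInvPair σ σ'] [RingHomInvPair σ' σ]
    (e : M ≃ₛₗ[σ] M₂) : (socle R M).map (e : M →ₛₗ[σ] M₂) = socle R₂ M₂ := by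
  have hatoms : Submodule.orderIsoMapComap e '' {m | IsAtom m} = {m | IsAtom m} :=
    Set.ext fun m ↦ by
      rw [OrderIso.image_eq_preimage_symm]
      exact (Submodule.orderIsoMapComap e).symm.isAtom_iff m
  simp_rw [socle, isSimpleModule_iff_isAtom, ← Submodule.orderIsoMapComap_apply, ← hatoms,
    OrderIso.map_sSup, sSup_image]

end Socle

section UnitConjugation

variable {R A V : Type*} [Ring R] [Ring A] [AddCommGroup V] [Module A V] [Module R V]
  {f : R →+* A} (hf : ∀ (x : R) (v : V), x • v = f x • v)
  {σ σ' : R →+* R} [RingHomInvPair σ σ'] [RingHomInvPair σ' σ]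
include hf σ'

def unitsSMulSemilinearEquiv (u : Aˣ) (hu : ∀ x, (u : A) * f x = f (σ x) * u) :
    V ≃ₛₗ[σ] V where
  __ := DistribMulAction.toAddEquiv V u
  map_smul' x v := by
    simp only [AddEquiv.toFun_eq_coe, DistribMulAction.toAddEquiv_apply, Units.smul_def,
      hf, ← mul_smul, hu]

theorem units_smul_mem_socle (u : Aˣ) (hu : ∀ x, (u : A) * f x = f (σ x) * u) {v : V}
    (hv : v ∈ socle R V) : u • v ∈ socle R V := by
  rw [← map_socle (unitsSMulSemilinearEquiv hf u hu)]
  exact Submodule.mem_map_of_mem hv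

end UnitConjugation

section GroupAlgebra

variable {k G V : Type*} [Ring k] [Group G] {N : Subgroup G}

theorem single_mul_mapDomainRingHom_subtype [N.Normal] (g : G) (x : MonoidAlgebra k N) :
    single g 1 * mapDomainRingHom k N.subtype x =
      mapDomainRingHom k N.subtype (mapDomainRingEquiv k (MulAut.conjNormal g) x) * single g 1 := by
  induction x using MonoidAlgebra.induction_linear with
  | zero => simp
  | add x y hx hy => simp only [map_add, mul_add, add_mul, hx, hy]
  | single n r => simp [mapDomainRingHom_apply, single_mul_single, mul_assoc]

variable [AddCommGroup V] [Module (MonoidAlgebra k G) V] [Module (MonoidAlgebra k N) V]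
  (hres : ∀ (x : MonoidAlgebra k N) (v : V), x • v = mapDomainRingHom k N.subtype x • v)
include hres

theorem single_smul_eq_single_one_smul (g : G) (r : k) (v : V) :
    (single g r : MonoidAlgebra k G) • v =
      (single 1 r : MonoidAlgebra k N) • (single g 1 : MonoidAlgebra k G) • v := by
  rw [hres, ← mul_smul, mapDomainRingHom_apply, mapDomain_single, Subgroup.coe_subtype,
    OneMemClass.coe_one, single_mul_single, one_mul, mul_one]

theorem smul_mem_span_range_single_smul (x : MonoidAlgebra k G) (v : V) :
    x • v ∈ Submodule.span (MonoidAlgebra k N) (Set.range fun g : G ↦ single g (1 : k) • v) := by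
  induction x using MonoidAlgebra.induction_linear with
  | zero => simp
  | add x y hx hy => rw [add_smul]; exact add_mem hx hy
  | single g r =>
    rw [single_smul_eq_single_one_smul hres]
    exact Submodule.smul_mem _ _ (Submodule.subset_span ⟨g, rfl⟩)

theorem finite_of_isSimpleModule [Finite G] [IsSimpleModule (MonoidAlgebra k G) V] :
    Module.Finite (MonoidAlgebra k N) V := by
  have : Nontrivial V := IsSimpleModule.nontrivial (MonoidAlgebra k G) V
  obtain ⟨v, hv⟩ := exists_ne (0 : V)
  refine ⟨⟨(Set.finite_range fun g : G ↦ single g (1 : k) • v).toFinset, top_unique ?_⟩⟩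
  rintro w -
  obtain ⟨x, rfl⟩ := IsSimpleModule.toSpanSingleton_surjective (MonoidAlgebra k G) hv w
  simpa using smul_mem_span_range_single_smul hres x v

theorem eq_top_of_single_smul_mem [IsSimpleModule (MonoidAlgebra k G) V]
    {p : Submodule (MonoidAlgebra k N) V} (hp : p ≠ ⊥)
    (hG : ∀ g : G, ∀ v ∈ p, (single g 1 : MonoidAlgebra k G) • v ∈ p) : p = ⊤ := by
  let q : Submodule (MonoidAlgebra k G) V :=
    { p.toAddSubmonoid with
      smul_mem' x v hv := by
        induction x using MonoidAlgebra.induction_linear with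
        | zero => simp
        | add x y hx hy => rw [add_smul]; exact p.add_mem hx hy
        | single g r =>
          rw [single_smul_eq_single_one_smul hres]
          exact p.smul_mem _ (hG g v hv) }
  have hq : q = ⊤ := (eq_bot_or_eq_top q).resolve_left fun h ↦
    hp ((Submodule.eq_bot_iff p).2 ((Submodule.eq_bot_iff q).1 h))
  exact Submodule.eq_top_iff'.2 fun v ↦ (Submodule.eq_top_iff'.1 hq v : v ∈ q)

theorem single_smul_mem_socle [N.Normal] (g : G) {v : V}
    (hv : v ∈ socle (MonoidAlgebra k N) V) :
    (single g 1 : MonoidAlgebra k G) • v ∈ socle (MonoidAlgebra k N) V := by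
  let e := mapDomainRingEquiv k (MulAut.conjNormal g : N ≃* N)
  have := RingHomInvPair.of_ringEquiv e
  have := RingHomInvPair.of_ringEquiv_symm e
  exact units_smul_mem_socle hres (σ := e) (Units.map (of k G) (toUnits g))
    (single_mul_mapDomainRingHom_subtype g) hv

end GroupAlgebra

/-- Clifford's theorem (semisimplicity of restriction): Let `G` be a finite group, `N ⊴ G`
a normal subgroup, `k` a field and `V` a simple `k[G]`-module. Then the restriction of `V`
to `k[N]` is semisimple. The `k[N]`-module structure on `V` is required to be the restriction
of the `k[G]`-module structure along the inclusion `N ⊆ G`. -/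
theorem clifford_restriction_isSemisimple
    {k G : Type*} [Field k] [Group G] [Finite G]
    (N : Subgroup G) [N.Normal]
    (V : Type*) [AddCommGroup V] [Module (MonoidAlgebra k G) V]
    [IsSimpleModule (MonoidAlgebra k G) V]
    [Module (MonoidAlgebra k ↥N) V]
    (hres : ∀ (x : MonoidAlgebra k ↥N) (v : V),
      x • v = MonoidAlgebra.mapDomainRingHom k N.subtype x • v) :
    IsSemisimpleModule (MonoidAlgebra k ↥N) V := by
  have : Module.Finite (MonoidAlgebra k N) V := finite_of_isSimpleModule hres
  have : IsArtinianRing (MonoidAlgebra k N) := .of_finite k _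
  have : Nontrivial V := IsSimpleModule.nontrivial (MonoidAlgebra k G) V
  exact .of_sSup_simples_eq_top <|
    eq_top_of_single_smul_mem hres socle_ne_bot fun g _ ↦ single_smul_mem_socle hres g
end

section
/- Let G be a finite group, N ⊴ G a normal subgroup, k a field, and V a simple k[G]-module. Then any two simple k[N]-submodules of the restriction V|_N are conjugate under G; that is, if W₁ and W₂ are simple k[N]-submodules of V|_N, there exists g ∈ G such that W₂ is isomorphic to the g-twist of W₁ (the k[N]-module with underlying space W₁ and action n · w = (g⁻¹ n g) w). -/
/-!
Let `σ_g = conjNormalRingHom k N g` be the automorphism of `k[N]` induced by conjugation with `g`.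
In `k[G]` one has `g * x = σ_g(x) * g` for `x ∈ k[N]`, so `v ↦ g • v` is a `σ_g`-semilinear
automorphism of `V|_N`; it maps simple `k[N]`-submodules to simple ones. The translates `g W₁`
span a nonzero `k[G]`-submodule, hence all of `V`, so `V|_N` is a sum of the simple modules `g W₁`
and the simple submodule `W₂` is isomorphic to one of them. Composing `W₁ ≃ g W₁ ≃ W₂` gives the
twisted isomorphism.
-/

namespace MonoidAlgebra

variable (k : Type*) {G : Type*} [Semiring k] [Group G] (N : Subgroup G) [N.Normal]

noncomputable def conjNormalRingHom (g : G) : MonoidAlgebra k N →+* MonoidAlgebra k N :=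
  mapDomainRingHom k ((MulAut.conjNormal g : MulAut N) : N →* N)

variable {k N}

theorem conjNormalRingHom_single (g : G) (n : N) (c : k) :
    conjNormalRingHom k N g (single n c) = single (MulAut.conjNormal g n) c :=
  mapDomain_single

theorem conjNormalRingHom_mul (g h : G) :
    conjNormalRingHom k N (g * h) = (conjNormalRingHom k N g).comp (conjNormalRingHom k N h) := by
  rw [conjNormalRingHom, conjNormalRingHom, conjNormalRingHom, ← mapDomainRingHom_comp, map_mul]
  rfl

theorem conjNormalRingHom_one : conjNormalRingHom k N (1 : G) = RingHom.id _ := by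
  rw [conjNormalRingHom, map_one]
  exact mapDomainRingHom_id

instance (g : G) : RingHomInvPair (conjNormalRingHom k N g) (conjNormalRingHom k N g⁻¹) where
  comp_eq := by rw [← conjNormalRingHom_mul, inv_mul_cancel, conjNormalRingHom_one]
  comp_eq₂ := by rw [← conjNormalRingHom_mul, mul_inv_cancel, conjNormalRingHom_one]

instance (g : G) : RingHomInvPair (conjNormalRingHom k N g⁻¹) (conjNormalRingHom k N g) where
  comp_eq := by rw [← conjNormalRingHom_mul, mul_inv_cancel, conjNormalRingHom_one]
  comp_eq₂ := by rw [← conjNormalRingHom_mul, inv_mul_cancel, conjNormalRingHom_one]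

theorem of_mul_mapDomainRingHom_subtype (g : G) (x : MonoidAlgebra k N) :
    of k G g * mapDomainRingHom k N.subtype x
      = mapDomainRingHom k N.subtype (conjNormalRingHom k N g x) * of k G g := by
  induction x using induction_linear with
  | zero => simp
  | add x y hx hy => simp only [map_add, mul_add, add_mul, hx, hy]
  | single n c =>
    simp [conjNormalRingHom_single, mapDomainRingHom, single_mul_single, mul_assoc]

end MonoidAlgebra

open MonoidAlgebra

namespace Clifford

section Semiring

variable {k G : Type*} [Semiring k] [Group G] {N : Subgroup G} [N.Normal]
  {V : Type*} [AddCommMonoid V] [Module (MonoidAlgebra k G) V] [Module (MonoidAlgebra k N) V]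
  (hres : ∀ (x : MonoidAlgebra k N) (v : V), x • v = mapDomainRingHom k N.subtype x • v)

noncomputable def translate (g : G) : V ≃ₛₗ[conjNormalRingHom k N g] V where
  toFun v := of k G g • v
  invFun v := of k G g⁻¹ • v
  map_add' := smul_add _
  map_smul' x v := by simp only [hres, ← mul_smul, of_mul_mapDomainRingHom_subtype]
  left_inv v := by simp only [← mul_smul, ← map_mul, inv_mul_cancel, map_one, one_smul]
  right_inv v := by simp only [← mul_smul, ← map_mul, mul_inv_cancel, map_one, one_smul]

end Semiring

variable {k G : Type*} [Ring k] [Group G] {N : Subgroup G} [N.Normal]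
  {V : Type*} [AddCommGroup V] [Module (MonoidAlgebra k G) V] [Module (MonoidAlgebra k N) V]
  (hres : ∀ (x : MonoidAlgebra k N) (v : V), x • v = mapDomainRingHom k N.subtype x • v)

theorem isSimpleModule_map_translate (g : G) (W : Submodule (MonoidAlgebra k N) V)
    [IsSimpleModule (MonoidAlgebra k N) W] :
    IsSimpleModule (MonoidAlgebra k N) (W.map (translate hres g).toLinearMap) :=
  isSimpleModule_iff_isAtom.mpr <| (Submodule.orderIsoMapComap (translate hres g)).isAtom_iff W
    |>.mpr <| isSimpleModule_iff_isAtom.mp ‹_›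

theorem iSup_map_translate_eq_top [IsSimpleModule (MonoidAlgebra k G) V]
    {W : Submodule (MonoidAlgebra k N) V} (hW : W ≠ ⊥) :
    ⨆ g, W.map (translate hres g).toLinearMap = ⊤ := by
  obtain ⟨w, hwW, hw⟩ := W.ne_bot_iff.mp hW
  refine Submodule.eq_top_iff'.mpr fun v => ?_
  obtain ⟨x, rfl⟩ := Submodule.mem_span_singleton.mp
    (IsSimpleModule.span_singleton_eq_top (MonoidAlgebra k G) hw ▸ Submodule.mem_top (x := v))
  induction x using induction_linear with
  | zero => simp
  | add x y hx hy => rw [add_smul]; exact add_mem hx hy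
  | single g c =>
    have hsingle : single g c = mapDomainRingHom k N.subtype (single 1 c) * of k G g := by
      simp [mapDomainRingHom, single_mul_single]
    rw [hsingle, mul_smul, ← hres]
    exact Submodule.smul_mem _ _ <| Submodule.mem_iSup_of_mem g <| Submodule.mem_map_of_mem hwW

end Clifford

theorem clifford_conjugacy_general
    {k G : Type*} [Field k] [Group G]
    (N : Subgroup G) [N.Normal]
    (V : Type*) [AddCommGroup V] [Module (MonoidAlgebra k G) V]
    [IsSimpleModule (MonoidAlgebra k G) V]
    [Module (MonoidAlgebra k ↥N) V]
    (hres : ∀ (x : MonoidAlgebra k ↥N) (v : V),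
      x • v = MonoidAlgebra.mapDomainRingHom k N.subtype x • v)
    (W₁ W₂ : Submodule (MonoidAlgebra k ↥N) V)
    (hW₁ : IsSimpleModule (MonoidAlgebra k ↥N) W₁)
    (hW₂ : IsSimpleModule (MonoidAlgebra k ↥N) W₂) :
    ∃ (g : G) (e : W₁ ≃+ W₂), ∀ (x : MonoidAlgebra k ↥N) (w : W₁),
      e (MonoidAlgebra.mapDomainRingHom k ((MulAut.conjNormal g⁻¹ : MulAut ↥N) : ↥N →* ↥N) x • w)
        = x • e w := by
  have : ∀ m : Set.range fun g => W₁.map (Clifford.translate hres g).toLinearMap,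
      IsSimpleModule (MonoidAlgebra k N) m := by
    rintro ⟨_, g, rfl⟩
    exact Clifford.isSimpleModule_map_translate hres g W₁
  obtain ⟨_, ⟨g, rfl⟩, ⟨f⟩⟩ := W₂.linearEquiv_of_sSup_eq_top _ <| by
    rw [sSup_range]
    exact Clifford.iSup_map_translate_eq_top hres (isSimpleModule_iff_isAtom.mp hW₁).1
  let e : W₁ ≃ₛₗ[conjNormalRingHom k N g] W₂ :=
    ((Clifford.translate hres g).submoduleMap W₁).trans f.symm
  refine ⟨g, e.toAddEquiv, fun x w => ?_⟩
  change e (conjNormalRingHom k N g⁻¹ x • w) = x • e w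
  rw [map_smulₛₗ, RingHomInvPair.comp_apply_eq₂]

/-- Clifford's theorem (conjugacy): Let `G` be a finite group, `N ⊴ G`, `k` a field and `V`
a simple `k[G]`-module, with the `k[N]`-module structure on `V` given by restriction.
Any two simple `k[N]`-submodules `W₁`, `W₂` of `V|_N` are `G`-conjugate: there are `g : G`
and an additive isomorphism `e : W₁ ≃+ W₂` intertwining the `k[N]`-action on `W₂` with the
`g`-twisted `k[N]`-action on `W₁` (where `n` acts through `g⁻¹ n g`). -/
theorem clifford_conjugacy
    {k G : Type*} [Field k] [Group G] [Finite G]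
    (N : Subgroup G) [N.Normal]
    (V : Type*) [AddCommGroup V] [Module (MonoidAlgebra k G) V]
    [IsSimpleModule (MonoidAlgebra k G) V]
    [Module (MonoidAlgebra k ↥N) V]
    (hres : ∀ (x : MonoidAlgebra k ↥N) (v : V),
      x • v = MonoidAlgebra.mapDomainRingHom k N.subtype x • v)
    (W₁ W₂ : Submodule (MonoidAlgebra k ↥N) V)
    (hW₁ : IsSimpleModule (MonoidAlgebra k ↥N) W₁)
    (hW₂ : IsSimpleModule (MonoidAlgebra k ↥N) W₂) :
    ∃ (g : G) (e : W₁ ≃+ W₂), ∀ (x : MonoidAlgebra k ↥N) (w : W₁),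
      e (MonoidAlgebra.mapDomainRingHom k ((MulAut.conjNormal g⁻¹ : MulAut ↥N) : ↥N →* ↥N) x • w)
        = x • e w :=
  clifford_conjugacy_general N V hres W₁ W₂ hW₁ hW₂
end

section
/- Let G be a finite group, N ⊴ G a normal subgroup, and k a field. Then every simple k[N]-module W is isomorphic to a k[N]-submodule of the restriction to N of some simple k[G]-module. -/
/-!
Let `p : k[G] → k[N]` keep the coefficients on `N`; it is a `k[N]`-bimodule retraction of the
inclusion `k[N] → k[G]`, so `w ↦ (x ↦ p x • w)` embeds `W` `k[N]`-linearly into the coinduced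
module `Hom_{k[N]}(k[G], W)`. The `k[G]`-submodule generated by the image of some `w ≠ 0` is
cyclic, hence has a maximal submodule; `W` maps nontrivially, hence injectively, into the simple
quotient.
-/

universe u

open Function MonoidAlgebra

namespace Submodule

variable {S M : Type*} [Ring S] [AddCommGroup M] [Module S M]

theorem span_singleton_mk_self_eq_top (m : M) :
    span S {(⟨m, mem_span_singleton_self m⟩ : span S {m})} = ⊤ := by
  refine eq_top_iff.mpr fun ⟨x, hx⟩ _ => ?_
  obtain ⟨s, rfl⟩ := mem_span_singleton.mp hx
  exact mem_span_singleton.mpr ⟨s, rfl⟩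

theorem exists_isCoatom_mk_notMem_span_singleton {m : M} (hm : m ≠ 0) :
    ∃ C : Submodule S (span S {m}), IsCoatom C ∧ ⟨m, mem_span_singleton_self m⟩ ∉ C := by
  have : Nontrivial (span S {m}) := ⟨⟨⟨m, mem_span_singleton_self m⟩, 0, by simpa using hm⟩⟩
  obtain ⟨C, hC⟩ := IsCoatomic.exists_coatom (α := Submodule S (span S {m}))
  refine ⟨C, hC, fun hmC => hC.1 (top_unique ?_)⟩
  rw [← span_singleton_mk_self_eq_top m]
  exact span_le.mpr (Set.singleton_subset_iff.mpr hmC)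

end Submodule

theorem exists_isSimpleModule_injective_semilinearMap {R S : Type*} [Ring R] [Ring S]
    {σ : R →+* S} {W M : Type u} [AddCommGroup W] [Module R W] [IsSimpleModule R W]
    [AddCommGroup M] [Module S M] (j : W →ₛₗ[σ] M) (hj : j ≠ 0) :
    ∃ V : ModuleCat.{u} S, IsSimpleModule S V ∧ ∃ φ : W →ₛₗ[σ] V, Injective φ := by
  obtain ⟨w₀, hw₀⟩ : ∃ w, j w ≠ 0 := by
    by_contra! h
    exact hj (LinearMap.ext h)
  have hw₀' : w₀ ≠ 0 := by
    rintro rfl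
    exact hw₀ (map_zero j)
  obtain ⟨C, hC, hw₀C⟩ := Submodule.exists_isCoatom_mk_notMem_span_singleton (S := S) hw₀
  have hmem (w : W) : j w ∈ Submodule.span S {j w₀} := by
    have hw : w ∈ Submodule.span R {w₀} := by
      rw [IsSimpleModule.span_singleton_eq_top R hw₀']
      exact Submodule.mem_top
    obtain ⟨r, rfl⟩ := Submodule.mem_span_singleton.mp hw
    rw [map_smulₛₗ]
    exact Submodule.smul_mem _ _ (Submodule.mem_span_singleton_self _)
  let φ := C.mkQ ∘ₛₗ j.codRestrict _ hmem
  have hker : LinearMap.ker φ ≠ ⊤ := fun h =>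
    hw₀C <| (Submodule.Quotient.mk_eq_zero C).mp <| LinearMap.mem_ker.mp (h ▸ Submodule.mem_top)
  exact ⟨.of S (_ ⧸ C), isSimpleModule_iff_isCoatom.mpr hC, φ,
    LinearMap.ker_eq_bot.mp ((eq_bot_or_eq_top _).resolve_right hker)⟩

namespace ModuleCat

variable {R S : Type*} [Ring R] [Ring S] (f : R →+* S) (p : S →+ R)

def toCoextendScalarsOfRetraction (hpl : ∀ a b, p (f a * b) = a * p b)
    (hpr : ∀ a b, p (b * f a) = p b * a) (W : ModuleCat R) :
    W →ₛₗ[f] (coextendScalars f).obj W where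
  toFun w :=
    { toFun s := p (show S from s) • w
      map_add' s s' := add_smul (p s) (p s') w ▸ congrArg (· • w) (map_add p s s')
      map_smul' a s := by
        show p (f a * show S from s) • w = a • p s • w
        rw [hpl, mul_smul] }
  map_add' w w' := by ext s; exact smul_add (p s) w w'
  map_smul' a w := by
    ext s
    show p s • a • w = p ((show S from s) * f a) • w
    rw [hpr, mul_smul]

theorem toCoextendScalarsOfRetraction_injective (hpl : ∀ a b, p (f a * b) = a * p b)
    (hpr : ∀ a b, p (b * f a) = p b * a) (hp1 : p 1 = 1) (W : ModuleCat R) :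
    Injective (toCoextendScalarsOfRetraction f p hpl hpr W) :=
  LeftInverse.injective (g := fun g => CoextendScalars.equiv f W g (1 : S)) fun w => by
    show p 1 • w = w
    rw [hp1, one_smul]

end ModuleCat

namespace MonoidAlgebra

variable {k G : Type*} [Semiring k] [Group G] (H : Subgroup G)

theorem comapDomain_subtype_one :
    comapDomain (Subtype.val : H → G) Subtype.val_injective (1 : MonoidAlgebra k G) = 1 :=
  comapDomain_single_map Subtype.val Subtype.val_injective (1 : H) (1 : k)

theorem comapDomain_subtype_mapDomain_mul (a : MonoidAlgebra k H) (b : MonoidAlgebra k G) :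
    comapDomain Subtype.val Subtype.val_injective (mapDomain H.subtype a * b) =
      a * comapDomain Subtype.val Subtype.val_injective b := by
  induction a using induction_linear with
  | zero => simp
  | add x y hx hy => simp only [mapDomain_add, add_mul, comapDomain_add, hx, hy]
  | single m c => ext n; simp

theorem comapDomain_subtype_mul_mapDomain (a : MonoidAlgebra k H) (b : MonoidAlgebra k G) :
    comapDomain Subtype.val Subtype.val_injective (b * mapDomain H.subtype a) =
      comapDomain Subtype.val Subtype.val_injective b * a := by
  induction a using induction_linear with
  | zero => simp
  | add x y hx hy => simp only [mapDomain_add, mul_add, comapDomain_add, hx, hy]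
  | single m c => ext n; simp

end MonoidAlgebra

theorem simple_module_embeds_in_restriction_of_simple_general
    {k G : Type u} [Field k] [Group G]
    (N : Subgroup G)
    (W : Type u) [AddCommGroup W] [Module (MonoidAlgebra k ↥N) W]
    [IsSimpleModule (MonoidAlgebra k ↥N) W] :
    ∃ V : ModuleCat.{u} (MonoidAlgebra k G),
      IsSimpleModule (MonoidAlgebra k G) V ∧
      ∃ φ : W →ₗ[MonoidAlgebra k ↥N]
          ((ModuleCat.restrictScalars (MonoidAlgebra.mapDomainRingHom k N.subtype)).obj V),
        Function.Injective φ := by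
  let f := mapDomainRingHom k N.subtype
  let j := ModuleCat.toCoextendScalarsOfRetraction f
    (comapDomainAddMonoidHom Subtype.val Subtype.val_injective)
    (comapDomain_subtype_mapDomain_mul N) (comapDomain_subtype_mul_mapDomain N)
    (.of _ W)
  have := IsSimpleModule.nontrivial (MonoidAlgebra k N) W
  have hj : j ≠ 0 := LinearMap.ne_zero_of_injective <|
    ModuleCat.toCoextendScalarsOfRetraction_injective _ _ _ _ (comapDomain_subtype_one N) _
  obtain ⟨V, hV, φ, hφ⟩ := exists_isSimpleModule_injective_semilinearMap j hj
  exact ⟨V, hV, (ModuleCat.semilinearMapAddEquiv f (.of _ W) V φ).hom, hφ⟩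

/-- Let `G` be a finite group, `N ⊴ G` and `k` a field. Every simple `k[N]`-module `W`
embeds as a `k[N]`-submodule into the restriction to `N` of some simple `k[G]`-module. -/
theorem simple_module_embeds_in_restriction_of_simple
    {k G : Type u} [Field k] [Group G] [Finite G]
    (N : Subgroup G) [N.Normal]
    (W : Type u) [AddCommGroup W] [Module (MonoidAlgebra k ↥N) W]
    [IsSimpleModule (MonoidAlgebra k ↥N) W] :
    ∃ V : ModuleCat.{u} (MonoidAlgebra k G),
      IsSimpleModule (MonoidAlgebra k G) V ∧
      ∃ φ : W →ₗ[MonoidAlgebra k ↥N]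
          ((ModuleCat.restrictScalars (MonoidAlgebra.mapDomainRingHom k N.subtype)).obj V),
        Function.Injective φ :=
  simple_module_embeds_in_restriction_of_simple_general N W
end

section
/- Let G be a finite group, N ⊆ H normal subgroups of G, k a field, and V a simple k[G]-module. If the restriction V|_N is multiplicity-free (i.e., semisimple with pairwise non-isomorphic simple summands), then the restriction V|_H is also multiplicity-free. -/
/-!
Since `G` is finite, `V|_H` is finitely generated over the artinian ring `k[H]`, so it has a
simple submodule. Translation by `g ∈ G` is semilinear for conjugation by `g` on `k[H]`, so it
permutes the simple `k[H]`-submodules of `V`; their sum is therefore a nonzero `k[G]`-submodule,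
i.e. all of `V`, and `V|_H` is semisimple (Clifford). Finally, isomorphic `k[H]`-submodules of `V`
are isomorphic `k[N]`-submodules, and in a multiplicity-free module isomorphic submodules coincide:
an isomorphism carries each simple submodule of the first to an isomorphic, hence equal, simple
submodule of the second.
-/

/-- A module is multiplicity-free if it is semisimple and any two isomorphic simple
submodules are equal (so each isomorphism class of simples occurs at most once). -/
def IsMultiplicityFree (R M : Type*) [Ring R] [AddCommGroup M] [Module R M] : Prop :=
  IsSemisimpleModule R M ∧
    ∀ W₁ W₂ : Submodule R M, IsSimpleModule R W₁ → IsSimpleModule R W₂ →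
      Nonempty (W₁ ≃ₗ[R] W₂) → W₁ = W₂

open MonoidAlgebra

namespace IsMultiplicityFree

variable {R M : Type*} [Ring R] [AddCommGroup M] [Module R M]

theorem le_of_linearEquiv (hM : IsMultiplicityFree R M) {W₁ W₂ : Submodule R M}
    (e : W₁ ≃ₗ[R] W₂) : W₁ ≤ W₂ := by
  have := hM.1
  rw [← IsSemisimpleModule.sSup_simples_le W₁]
  refine sSup_le fun T ⟨hT, hTW₁⟩ ↦ ?_
  let f : W₁ →ₗ[R] M := W₂.subtype ∘ₗ e.toLinearMap
  have hf : Function.Injective f := W₂.subtype_injective.comp e.injective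
  let eT : T ≃ₗ[R] (T.comap W₁.subtype).map f :=
    (Submodule.comapSubtypeEquivOfLe hTW₁).symm.trans (Submodule.equivMapOfInjective f hf _)
  have hT' : IsSimpleModule R ((T.comap W₁.subtype).map f) := IsSimpleModule.congr eT.symm
  rw [hM.2 T _ hT hT' ⟨eT⟩]
  calc (T.comap W₁.subtype).map f ≤ LinearMap.range f := LinearMap.map_le_range
    _ ≤ LinearMap.range W₂.subtype := LinearMap.range_comp_le_range _ _
    _ = W₂ := W₂.range_subtype

theorem eq_of_linearEquiv (hM : IsMultiplicityFree R M) {W₁ W₂ : Submodule R M}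
    (e : W₁ ≃ₗ[R] W₂) : W₁ = W₂ :=
  le_antisymm (hM.le_of_linearEquiv e) (hM.le_of_linearEquiv e.symm)

theorem of_isScalarTower {S : Type*} [Ring S] [Module R S] [Module S M] [IsScalarTower R S M]
    (hR : IsMultiplicityFree R M) [IsSemisimpleModule S M] : IsMultiplicityFree S M := by
  refine ⟨‹_›, fun W₁ W₂ _ _ ⟨e⟩ ↦ Submodule.restrictScalars_injective R _ _ ?_⟩
  exact hR.eq_of_linearEquiv (e.restrictScalars R)

end IsMultiplicityFree

namespace MonoidAlgebra

variable {k G : Type*} [Ring k] [Group G]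

theorem single_one_mul_mapDomainRingHom_subtype (H : Subgroup G) [H.Normal] (g : G)
    (x : MonoidAlgebra k H) :
    single g 1 * mapDomainRingHom k H.subtype x =
      mapDomainRingHom k H.subtype (mapDomainRingEquiv k (MulAut.conjNormal g) x) * single g 1 := by
  induction x using MonoidAlgebra.induction_linear with
  | zero => simp
  | add x y hx hy => simp only [map_add, mul_add, add_mul, hx, hy]
  | single h c => simp [single_mul_single]

theorem single_smul_single_inv_smul {V : Type*} [AddCommGroup V] [Module (MonoidAlgebra k G) V]
    (g : G) (v : V) :
    (single g 1 : MonoidAlgebra k G) • (single g⁻¹ 1 : MonoidAlgebra k G) • v = v := by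
  rw [← mul_smul, single_mul_single, mul_inv_cancel, one_mul, ← one_def, one_smul]

end MonoidAlgebra

section Clifford

variable {k G : Type*} [Ring k] [Group G] (H : Subgroup G) {V : Type*} [AddCommGroup V]
  [Module (MonoidAlgebra k G) V] [Module (MonoidAlgebra k H) V]
  (hres : ∀ (x : MonoidAlgebra k H) (v : V), x • v = mapDomainRingHom k H.subtype x • v)
include hres

noncomputable def conjSemilinearMap [H.Normal] (g : G) :
    V →ₛₗ[(mapDomainRingEquiv k (MulAut.conjNormal g : MulAut H) :
      MonoidAlgebra k H →+* MonoidAlgebra k H)] V where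
  toFun v := (single g 1 : MonoidAlgebra k G) • v
  map_add' := smul_add _
  map_smul' x v := by
    simp only [hres, ← mul_smul, single_one_mul_mapDomainRingHom_subtype]
    rfl

theorem conjSemilinearMap_bijective [H.Normal] (g : G) :
    Function.Bijective (conjSemilinearMap H hres g) := by
  refine Function.bijective_iff_has_inverse.mpr
    ⟨fun v ↦ (single g⁻¹ 1 : MonoidAlgebra k G) • v, fun v ↦ ?_, fun v ↦ ?_⟩
  · simpa [conjSemilinearMap] using single_smul_single_inv_smul (k := k) g⁻¹ v
  · exact single_smul_single_inv_smul g v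

theorem isSimpleModule_map_conjSemilinearMap [H.Normal] (g : G)
    {W : Submodule (MonoidAlgebra k H) V} (hW : IsSimpleModule (MonoidAlgebra k H) W) :
    IsSimpleModule (MonoidAlgebra k H) (W.map (conjSemilinearMap H hres g)) := by
  rw [isSimpleModule_iff_isAtom] at hW ⊢
  exact (Submodule.orderIsoMapComapOfBijective _
    (conjSemilinearMap_bijective H hres g)).isAtom_iff W |>.mpr hW

theorem eq_top_of_forall_single_smul_mem [IsSimpleModule (MonoidAlgebra k G) V]
    {W : Submodule (MonoidAlgebra k H) V} (hW₀ : W ≠ ⊥)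
    (hW : ∀ g : G, ∀ v ∈ W, (single g 1 : MonoidAlgebra k G) • v ∈ W) : W = ⊤ := by
  let W' : Submodule (MonoidAlgebra k G) V :=
    { carrier := W
      add_mem' := W.add_mem
      zero_mem' := W.zero_mem
      smul_mem' a v hv := by
        induction a using MonoidAlgebra.induction_linear with
        | zero => simp
        | add a b ha hb => simpa [add_smul] using W.add_mem ha hb
        | single g c =>
          have hc : (single g c : MonoidAlgebra k G) =
              single g 1 * mapDomainRingHom k H.subtype (single 1 c) := by
            simp [single_mul_single]
          rw [hc, mul_smul, ← hres]
          exact hW g _ (W.smul_mem _ hv) }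
  obtain ⟨v, hvW, hv₀⟩ := (Submodule.ne_bot_iff W).mp hW₀
  have hW' : W' = ⊤ :=
    (eq_bot_or_eq_top W').resolve_left <| (Submodule.ne_bot_iff W').mpr ⟨v, hvW, hv₀⟩
  exact Submodule.eq_top_iff'.mpr fun v ↦ show v ∈ W' from hW' ▸ Submodule.mem_top

theorem isSemisimpleModule_restrict_normal [H.Normal] [IsSimpleModule (MonoidAlgebra k G) V]
    (hex : ∃ W : Submodule (MonoidAlgebra k H) V, IsSimpleModule (MonoidAlgebra k H) W) :
    IsSemisimpleModule (MonoidAlgebra k H) V := by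
  set socle := sSup {W : Submodule (MonoidAlgebra k H) V | IsSimpleModule (MonoidAlgebra k H) W}
  have hstable (g : G) : socle ≤ socle.comap (conjSemilinearMap H hres g) :=
    sSup_le fun W hW ↦ Submodule.map_le_iff_le_comap.mp <|
      le_sSup (isSimpleModule_map_conjSemilinearMap H hres g hW)
  obtain ⟨W, hW⟩ := hex
  have hsocle₀ : socle ≠ ⊥ :=
    ne_bot_of_le_ne_bot (isSimpleModule_iff_isAtom.mp hW).1 (le_sSup hW)
  exact .of_sSup_simples_eq_top <|
    eq_top_of_forall_single_smul_mem H hres hsocle₀ fun g v hv ↦ hstable g hv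

theorem moduleFinite_restrict [Finite G] [IsSimpleModule (MonoidAlgebra k G) V] :
    Module.Finite (MonoidAlgebra k H) V := by
  have := IsSimpleModule.nontrivial (MonoidAlgebra k G) V
  obtain ⟨v, hv⟩ := exists_ne (0 : V)
  let S := Set.range fun g : G ↦ (single g 1 : MonoidAlgebra k G) • v
  have hS (a : MonoidAlgebra k G) : a • v ∈ Submodule.span (MonoidAlgebra k H) S := by
    induction a using MonoidAlgebra.induction_linear with
    | zero => simp
    | add a b ha hb => simpa [add_smul] using Submodule.add_mem _ ha hb
    | single g c =>
      have hc : (single g c : MonoidAlgebra k G) =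
          mapDomainRingHom k H.subtype (single 1 c) * single g 1 := by
        simp [single_mul_single]
      rw [hc, mul_smul, ← hres]
      exact Submodule.smul_mem _ _ (Submodule.subset_span ⟨g, rfl⟩)
  refine ⟨Submodule.fg_def.mpr
    ⟨S, Set.finite_range _, Submodule.eq_top_iff'.mpr fun w ↦ ?_⟩⟩
  obtain ⟨a, rfl⟩ := IsSimpleModule.toSpanSingleton_surjective (MonoidAlgebra k G) hv w
  exact hS a

end Clifford

theorem multiplicityFree_of_multiplicityFree_smaller_normal_general
    {k G : Type*} [Field k] [Group G] [Finite G]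
    (N H : Subgroup G) [H.Normal] (hNH : N ≤ H)
    (V : Type*) [AddCommGroup V] [Module (MonoidAlgebra k G) V]
    [IsSimpleModule (MonoidAlgebra k G) V]
    [Module (MonoidAlgebra k ↥N) V] [Module (MonoidAlgebra k ↥H) V]
    (hresN : ∀ (x : MonoidAlgebra k ↥N) (v : V),
      x • v = MonoidAlgebra.mapDomainRingHom k N.subtype x • v)
    (hresH : ∀ (x : MonoidAlgebra k ↥H) (v : V),
      x • v = MonoidAlgebra.mapDomainRingHom k H.subtype x • v)
    (hmf : IsMultiplicityFree (MonoidAlgebra k ↥N) V) :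
    IsMultiplicityFree (MonoidAlgebra k ↥H) V := by
  have : Module.Finite (MonoidAlgebra k H) V := moduleFinite_restrict H hresH
  have : IsArtinianRing (MonoidAlgebra k H) := .of_finite k _
  have : Nontrivial V := IsSimpleModule.nontrivial (MonoidAlgebra k G) V
  have : IsSemisimpleModule (MonoidAlgebra k H) V :=
    isSemisimpleModule_restrict_normal H hresH <| by
      simpa only [isSimpleModule_iff_isAtom] using IsAtomic.exists_atom (Submodule _ V)
  let ι := mapDomainRingHom k (Subgroup.inclusion hNH)
  let : Module (MonoidAlgebra k N) (MonoidAlgebra k H) := .compHom _ ι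
  have hι : (mapDomainRingHom k H.subtype).comp ι = mapDomainRingHom k N.subtype := by
    rw [← mapDomainRingHom_comp]; rfl
  have : IsScalarTower (MonoidAlgebra k N) (MonoidAlgebra k H) V := ⟨fun x y v ↦ by
    change (ι x * y) • v = _
    rw [hresH (ι x * y), hresN x, hresH y, ← mul_smul, map_mul, ← hι, RingHom.comp_apply]⟩
  exact hmf.of_isScalarTower

/-- Let `G` be a finite group, `N ⊆ H` normal subgroups of `G`, `k` a field and `V` a simple
`k[G]`-module, with the `k[N]`- and `k[H]`-module structures on `V` given by restriction.
If `V|_N` is multiplicity-free then so is `V|_H`. -/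
theorem multiplicityFree_of_multiplicityFree_smaller_normal
    {k G : Type*} [Field k] [Group G] [Finite G]
    (N H : Subgroup G) [N.Normal] [H.Normal] (hNH : N ≤ H)
    (V : Type*) [AddCommGroup V] [Module (MonoidAlgebra k G) V]
    [IsSimpleModule (MonoidAlgebra k G) V]
    [Module (MonoidAlgebra k ↥N) V] [Module (MonoidAlgebra k ↥H) V]
    (hresN : ∀ (x : MonoidAlgebra k ↥N) (v : V),
      x • v = MonoidAlgebra.mapDomainRingHom k N.subtype x • v)
    (hresH : ∀ (x : MonoidAlgebra k ↥H) (v : V),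
      x • v = MonoidAlgebra.mapDomainRingHom k H.subtype x • v)
    (hmf : IsMultiplicityFree (MonoidAlgebra k ↥N) V) :
    IsMultiplicityFree (MonoidAlgebra k ↥H) V :=
  multiplicityFree_of_multiplicityFree_smaller_normal_general N H hNH V hresN hresH hmf
end
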